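/- arXiv:2509.06742 — 3 statements merged into one kernel-verified Lean document; each statement's English description precedes it below -/
import Mathlib

section
/- For pressure laws p^i(ρ) = a_i² ρ with a_i > 0, constants C_i > 0 and λ > 0, define α_i(z) = C_i exp(λ²θ z/(2a_i²)), ρ^i(t,x) = α_i(λt - x), q^i(t,x) = λ α_i(λt - x). Then these traveling waves satisfy the coupled isothermal Euler system ρ^i_t + q^i_x = 0 and q^i_t + (a_i²ρ^i + (q^i)²/ρ^i)_x = -(θ/2) q^i|q^i|/ρ^i - Ω ρ^i(v^i - v); in particular v^i = v = λ for all i, so the coupling terms vanish. -/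
/-- The traveling-wave profile α_i(z) = C_i exp(λ²θ z/(2a_i²)) of Example 2. -/
noncomputable def αEx (C a θ lam z : ℝ) : ℝ := C * Real.exp (lam ^ 2 * θ / (2 * a ^ 2) * z)

/-!
Along the profile α(z) = C exp(k z), k = λ²θ/(2a²), every component moves with velocity
q/ρ = λ, so the barycentric velocity is λ as well and the interspecies drag vanishes.
The continuity equation holds for any profile of a wave of speed λ carrying momentum λρ.
In the momentum equation the flux is (a² + λ²)ρ, so q_t + (flux)_x = -a² k α = -(θ/2) λ² α,
which is exactly the friction term -(θ/2) q|q|/ρ since λ > 0.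
-/

lemma αEx_pos {C : ℝ} (hC : 0 < C) (a θ lam z : ℝ) : 0 < αEx C a θ lam z :=
  mul_pos hC (Real.exp_pos _)

lemma hasDerivAt_αEx (C a θ lam z : ℝ) :
    HasDerivAt (αEx C a θ lam) (lam ^ 2 * θ / (2 * a ^ 2) * αEx C a θ lam z) z := by
  have hlin : HasDerivAt (fun z : ℝ => lam ^ 2 * θ / (2 * a ^ 2) * z)
      (lam ^ 2 * θ / (2 * a ^ 2)) z := by
    simpa using (hasDerivAt_id z).const_mul (lam ^ 2 * θ / (2 * a ^ 2))
  refine (hlin.exp.const_mul C).congr_deriv ?_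
  unfold αEx
  ring

lemma HasDerivAt.comp_mul_sub_const {f : ℝ → ℝ} {f' : ℝ} (c t x : ℝ)
    (hf : HasDerivAt f f' (c * t - x)) : HasDerivAt (fun s => f (c * s - x)) (f' * c) t := by
  have hinner : HasDerivAt (fun s : ℝ => c * s - x) c t := by
    simpa using ((hasDerivAt_id t).const_mul c).sub_const x
  exact hf.comp t hinner

lemma isothermal_flux_eq (a c : ℝ) {ρ : ℝ} (hρ : ρ ≠ 0) :
    a ^ 2 * ρ + (c * ρ) ^ 2 / ρ = (a ^ 2 + c ^ 2) * ρ := by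
  field_simp

lemma barycentric_velocity_of_proportional_momenta {ι : Type*} {s : Finset ι} (hs : s.Nonempty)
    {ρ : ι → ℝ} (hρ : ∀ j ∈ s, 0 < ρ j) (c : ℝ) :
    (∑ j ∈ s, ρ j * (c * ρ j / ρ j)) / ∑ j ∈ s, ρ j = c := by
  have hvel : ∀ j ∈ s, ρ j * (c * ρ j / ρ j) = ρ j * c := fun j hj => by
    rw [mul_div_cancel_right₀ c (hρ j hj).ne']
  rw [Finset.sum_congr rfl hvel, ← Finset.sum_mul, mul_div_cancel_left₀ c
    (Finset.sum_pos hρ hs).ne']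

lemma friction_balances_momentum_flux {a α : ℝ} (ha : a ≠ 0) (hα : 0 < α) {lam : ℝ}
    (hlam : 0 < lam) (θ : ℝ) :
    lam * (lam ^ 2 * θ / (2 * a ^ 2) * α * lam)
        + (a ^ 2 + lam ^ 2) * -(lam ^ 2 * θ / (2 * a ^ 2) * α)
      = -(θ / 2) * (lam * α * |lam * α|) / α := by
  rw [abs_of_pos (mul_pos hlam hα)]
  field_simp
  ring

theorem example2_traveling_waves_solve_coupled_isothermal_euler_general
    (n : ℕ) (a C : Fin n → ℝ) (ha : ∀ i, 0 < a i) (hC : ∀ i, 0 < C i)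
    (θ lam Ω : ℝ) (hlam : 0 < lam) :
    ∀ i : Fin n, ∀ t x : ℝ,
      -- continuity equation ρ^i_t + q^i_x = 0
      (∃ dρt dqx : ℝ,
        HasDerivAt (fun s => αEx (C i) (a i) θ lam (lam * s - x)) dρt t ∧
        HasDerivAt (fun y => lam * αEx (C i) (a i) θ lam (lam * t - y)) dqx x ∧
        dρt + dqx = 0) ∧
      -- momentum equation q^i_t + (a_i²ρ^i + (q^i)²/ρ^i)_x = −(θ/2)q^i|q^i|/ρ^i − Ω ρ^i(v^i − v)
      (∃ dqt dfx : ℝ,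
        HasDerivAt (fun s => lam * αEx (C i) (a i) θ lam (lam * s - x)) dqt t ∧
        HasDerivAt
          (fun y => (a i) ^ 2 * αEx (C i) (a i) θ lam (lam * t - y)
            + (lam * αEx (C i) (a i) θ lam (lam * t - y)) ^ 2
              / αEx (C i) (a i) θ lam (lam * t - y)) dfx x ∧
        dqt + dfx
          = -(θ / 2) * (lam * αEx (C i) (a i) θ lam (lam * t - x)
                * |lam * αEx (C i) (a i) θ lam (lam * t - x)|)
              / αEx (C i) (a i) θ lam (lam * t - x)
            - Ω * αEx (C i) (a i) θ lam (lam * t - x)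
              * (lam * αEx (C i) (a i) θ lam (lam * t - x)
                    / αEx (C i) (a i) θ lam (lam * t - x)
                - (∑ j, αEx (C j) (a j) θ lam (lam * t - x)
                      * (lam * αEx (C j) (a j) θ lam (lam * t - x)
                          / αEx (C j) (a j) θ lam (lam * t - x)))
                  / (∑ j, αEx (C j) (a j) θ lam (lam * t - x)))) ∧
      -- each component velocity equals λ, hence equals the barycentric velocity
      lam * αEx (C i) (a i) θ lam (lam * t - x)
          / αEx (C i) (a i) θ lam (lam * t - x) = lam ∧
      (∑ j, αEx (C j) (a j) θ lam (lam * t - x)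
            * (lam * αEx (C j) (a j) θ lam (lam * t - x)
                / αEx (C j) (a j) θ lam (lam * t - x)))
          / (∑ j, αEx (C j) (a j) θ lam (lam * t - x)) = lam := by
  intro i t x
  have hα := hasDerivAt_αEx (C i) (a i) θ lam (lam * t - x)
  have hρt := hα.comp_mul_sub_const lam t x
  have hρx := hα.comp_const_sub (lam * t) x
  have hflux := (hρx.const_mul ((a i) ^ 2 + lam ^ 2)).congr_of_eventuallyEq
    (Filter.Eventually.of_forall fun y =>
      isothermal_flux_eq (a i) lam (αEx_pos (hC i) (a i) θ lam (lam * t - y)).ne')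
  have hvel : lam * αEx (C i) (a i) θ lam (lam * t - x) / αEx (C i) (a i) θ lam (lam * t - x)
      = lam := mul_div_cancel_right₀ lam (αEx_pos (hC i) (a i) θ lam (lam * t - x)).ne'
  have hbary := barycentric_velocity_of_proportional_momenta ⟨i, Finset.mem_univ i⟩
    (fun j _ => αEx_pos (hC j) (a j) θ lam (lam * t - x)) lam
  refine ⟨⟨_, _, hρt, hρx.const_mul lam, by ring⟩, ⟨_, _, hρt.const_mul lam, hflux, ?_⟩,
    hvel, hbary⟩
  rw [hvel, hbary, sub_self, mul_zero, sub_zero]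
  exact friction_balances_momentum_flux (ha i).ne' (αEx_pos (hC i) (a i) θ lam (lam * t - x))
    hlam θ

/-- for the linear pressure laws p^i(ρ) = a_i²ρ, the traveling waves
ρ^i(t,x) = α_i(λt − x), q^i(t,x) = λ α_i(λt − x) satisfy the continuity equations
ρ^i_t + q^i_x = 0 and the momentum equations
q^i_t + (a_i²ρ^i + (q^i)²/ρ^i)_x = −(θ/2) q^i|q^i|/ρ^i − Ω ρ^i (v^i − v);
moreover v^i = v = λ for all i, so the coupling terms vanish. -/
theorem example2_traveling_waves_solve_coupled_isothermal_euler
    (n : ℕ) (a C : Fin n → ℝ) (ha : ∀ i, 0 < a i) (hC : ∀ i, 0 < C i)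
    (θ lam Ω : ℝ) (hθ : 0 < θ) (hlam : 0 < lam) :
    ∀ i : Fin n, ∀ t x : ℝ,
      -- continuity equation ρ^i_t + q^i_x = 0
      (∃ dρt dqx : ℝ,
        HasDerivAt (fun s => αEx (C i) (a i) θ lam (lam * s - x)) dρt t ∧
        HasDerivAt (fun y => lam * αEx (C i) (a i) θ lam (lam * t - y)) dqx x ∧
        dρt + dqx = 0) ∧
      -- momentum equation q^i_t + (a_i²ρ^i + (q^i)²/ρ^i)_x = −(θ/2)q^i|q^i|/ρ^i − Ω ρ^i(v^i − v)
      (∃ dqt dfx : ℝ,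
        HasDerivAt (fun s => lam * αEx (C i) (a i) θ lam (lam * s - x)) dqt t ∧
        HasDerivAt
          (fun y => (a i) ^ 2 * αEx (C i) (a i) θ lam (lam * t - y)
            + (lam * αEx (C i) (a i) θ lam (lam * t - y)) ^ 2
              / αEx (C i) (a i) θ lam (lam * t - y)) dfx x ∧
        dqt + dfx
          = -(θ / 2) * (lam * αEx (C i) (a i) θ lam (lam * t - x)
                * |lam * αEx (C i) (a i) θ lam (lam * t - x)|)
              / αEx (C i) (a i) θ lam (lam * t - x)
            - Ω * αEx (C i) (a i) θ lam (lam * t - x)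
              * (lam * αEx (C i) (a i) θ lam (lam * t - x)
                    / αEx (C i) (a i) θ lam (lam * t - x)
                - (∑ j, αEx (C j) (a j) θ lam (lam * t - x)
                      * (lam * αEx (C j) (a j) θ lam (lam * t - x)
                          / αEx (C j) (a j) θ lam (lam * t - x)))
                  / (∑ j, αEx (C j) (a j) θ lam (lam * t - x)))) ∧
      -- each component velocity equals λ, hence equals the barycentric velocity
      lam * αEx (C i) (a i) θ lam (lam * t - x)
          / αEx (C i) (a i) θ lam (lam * t - x) = lam ∧
      (∑ j, αEx (C j) (a j) θ lam (lam * t - x)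
            * (lam * αEx (C j) (a j) θ lam (lam * t - x)
                / αEx (C j) (a j) θ lam (lam * t - x)))
          / (∑ j, αEx (C j) (a j) θ lam (lam * t - x)) = lam :=
  example2_traveling_waves_solve_coupled_isothermal_euler_general n a C ha hC θ lam Ω hlam
end

section
/- Let σ ∈ {−1,1} and suppose sign(v^i) = σ for all i (i.e. σ v^i > 0). Then U := Σ_i ρ^i (v^i − v) v^i |v^i| satisfies U = σ Σ_i ρ^i (v + v^i)(v^i − v)², and consequently |U| ≤ Σ_i ρ^i |v + v^i| (v^i − v)². -/
/-- if all velocities have the same strict sign σ ∈ {−1,1}, then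
U = Σ ρ^i (v^i − v) v^i |v^i| equals σ Σ ρ^i (v + v^i)(v^i − v)², and hence
|U| ≤ Σ ρ^i |v + v^i| (v^i − v)², where v is the barycentric velocity. -/
theorem friction_term_identity_and_bound
    (n : ℕ) (ρ v : Fin n → ℝ) (hρ : ∀ i, 0 < ρ i)
    (σ : ℝ) (hσ : σ = -1 ∨ σ = 1) (hsign : ∀ i, σ * v i > 0) :
    (∑ i, ρ i * (v i - (∑ j, ρ j * v j) / (∑ j, ρ j)) * v i * |v i|)
        = σ * ∑ i, ρ i * ((∑ j, ρ j * v j) / (∑ j, ρ j) + v i)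
            * (v i - (∑ j, ρ j * v j) / (∑ j, ρ j)) ^ 2 ∧
    abs (∑ i, ρ i * (v i - (∑ j, ρ j * v j) / (∑ j, ρ j)) * v i * |v i|)
        ≤ ∑ i, ρ i * abs ((∑ j, ρ j * v j) / (∑ j, ρ j) + v i)
            * (v i - (∑ j, ρ j * v j) / (∑ j, ρ j)) ^ 2 := by
  set c := (∑ j, ρ j * v j) / (∑ j, ρ j) with hc
  have habs : ∀ i, |v i| = σ * v i := by
    intro i
    rcases hσ with h | h <;> subst h
    · have := hsign i
      rw [abs_of_neg (by linarith)]; ring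
    · have := hsign i
      rw [abs_of_pos (by linarith)]; ring
  have hzero : ∑ i, ρ i * (v i - c) = 0 := by
    rcases Nat.eq_zero_or_pos n with h | h
    · subst h; simp
    · have hne : (Finset.univ : Finset (Fin n)).Nonempty := by
        exact Finset.univ_nonempty_iff.mpr (Fin.pos_iff_nonempty.mp h)
      have hS : (0:ℝ) < ∑ j, ρ j := Finset.sum_pos (fun i _ => hρ i) hne
      have hsum : ∑ i, ρ i * (v i - c) = (∑ i, ρ i * v i) - (∑ i, ρ i) * c := by
        simp only [mul_sub]
        rw [Finset.sum_sub_distrib, ← Finset.sum_mul]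
      rw [hsum, hc, mul_div_cancel₀ _ hS.ne', sub_self]
  have key : ∀ i, ρ i * (v i - c) * v i * |v i|
      = σ * (ρ i * (c + v i) * (v i - c) ^ 2) + σ * c ^ 2 * (ρ i * (v i - c)) := by
    intro i; rw [habs i]; ring
  have hId : (∑ i, ρ i * (v i - c) * v i * |v i|)
      = σ * ∑ i, ρ i * (c + v i) * (v i - c) ^ 2 := by
    calc (∑ i, ρ i * (v i - c) * v i * |v i|)
        = ∑ i, (σ * (ρ i * (c + v i) * (v i - c) ^ 2) + σ * c ^ 2 * (ρ i * (v i - c))) :=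
          Finset.sum_congr rfl (fun i _ => key i)
      _ = σ * (∑ i, ρ i * (c + v i) * (v i - c) ^ 2) + σ * c ^ 2 * ∑ i, ρ i * (v i - c) := by
          rw [Finset.sum_add_distrib, Finset.mul_sum, Finset.mul_sum]
      _ = σ * ∑ i, ρ i * (c + v i) * (v i - c) ^ 2 := by rw [hzero]; ring
  refine ⟨hId, ?_⟩
  have hσ1 : |σ| = 1 := by rcases hσ with h | h <;> simp [h]
  rw [hId, abs_mul, hσ1, one_mul]
  refine (Finset.abs_sum_le_sum_abs _ _).trans ?_
  refine Finset.sum_le_sum fun i _ => ?_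
  rw [abs_mul, abs_mul, abs_of_pos (hρ i), abs_of_nonneg (sq_nonneg (v i - c))]
end

section
/- Under the hypotheses of the mixture system (classical solutions ρ^i > 0, v^i of ρ^i_t + (ρ^i v^i)_x = 0 and q^i_t + (p_i(ρ^i) + ρ^i (v^i)²)_x = −(θ/2) ρ^i v^i|v^i| − Ω ρ^i u^i with q^i = ρ^i v^i, p_i'(r) = r P_i''(r)), the barycentric velocity v satisfies v_t + v v_x + Σ_i (ρ^i/ρ) P_i''(ρ^i) ρ^i_x = (1/ρ)( −Σ_i (ρ^i (u^i)²)_x − Σ_i (θ/2) ρ^i v^i |v^i| ), where u^i = v^i − v and ρ = Σ ρ^i. -/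
/-!
Summing the momentum equations, the interspecies drag drops out because `Σ ρ^i u^i = 0`, and
`ρ v_t = q_t - v ρ_t` with `ρ_t = -q_x`. Writing `v^i = u^i + v`, the summed flux derivatives
`Σ (ρ^i (v^i)²)_x` and `Σ (ρ^i (u^i)²)_x` differ, again by `Σ ρ^i u^i = 0`, only by
`2 v q_x - v² ρ_x`, which is exactly what `ρ v v_x` absorbs; what remains is the pressure term.
-/

open Finset

theorem HasDerivAt.mul_div_sub_sq {r m w : ℝ → ℝ} {r' m' w' x : ℝ} (hr : HasDerivAt r r' x)
    (hm : HasDerivAt m m' x) (hw : HasDerivAt w w' x) (hx : r x ≠ 0) :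
    HasDerivAt (fun y => r y * (m y / r y - w y) ^ 2)
      (2 * (m x / r x - w x) * (m' - w x * r' - r x * w') - (m x / r x - w x) ^ 2 * r') x := by
  refine (hr.fun_mul (((hm.fun_div hr hx).fun_sub hw).fun_pow 2)).congr_deriv ?_
  simp only [Nat.add_one_sub_one, pow_one]
  field_simp
  ring

theorem HasDerivAt.mul_div_sq {r m : ℝ → ℝ} {r' m' x : ℝ} (hr : HasDerivAt r r' x)
    (hm : HasDerivAt m m' x) (hx : r x ≠ 0) :
    HasDerivAt (fun y => r y * (m y / r y) ^ 2) (2 * (m x / r x) * m' - (m x / r x) ^ 2 * r') x := by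
  simpa using hr.mul_div_sub_sq hm (hasDerivAt_const x 0) hx

theorem HasDerivAt.mul_deriv_div_eq {m r : ℝ → ℝ} {m' r' w' x : ℝ} (hm : HasDerivAt m m' x)
    (hr : HasDerivAt r r' x) (hx : r x ≠ 0) (hw : HasDerivAt (fun y => m y / r y) w' x) :
    r x * w' = m' - m x / r x * r' := by
  rw [hw.unique (hm.div hr hx)]
  field_simp

theorem Finset.sum_mul_div_sub_sum_div_sum_eq_zero {ι : Type*} (s : Finset ι) {ρ q : ι → ℝ}
    (hρ : ∀ i ∈ s, ρ i ≠ 0) (hs : ∑ i ∈ s, ρ i ≠ 0) :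
    ∑ i ∈ s, ρ i * (q i / ρ i - (∑ j ∈ s, q j) / ∑ j ∈ s, ρ j) = 0 := by
  rw [sum_congr rfl fun i hi => by rw [mul_sub, mul_div_cancel₀ _ (hρ i hi)],
    sum_sub_distrib, ← sum_mul, mul_div_cancel₀ _ hs, sub_self]

theorem Finset.sum_relative_flux_deriv_eq {ι : Type*} (s : Finset ι) {ρ v ρx qx : ι → ℝ}
    {V Vx : ℝ} (hmass : ∑ i ∈ s, ρ i * (v i - V) = 0) :
    ∑ i ∈ s, (2 * (v i - V) * (qx i - V * ρx i - ρ i * Vx) - (v i - V) ^ 2 * ρx i)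
      = ∑ i ∈ s, (2 * v i * qx i - v i ^ 2 * ρx i)
        - 2 * V * ∑ i ∈ s, qx i + V ^ 2 * ∑ i ∈ s, ρx i := by
  calc _ = ∑ i ∈ s, ((2 * v i * qx i - v i ^ 2 * ρx i) - 2 * V * qx i + V ^ 2 * ρx i
          - 2 * Vx * (ρ i * (v i - V))) := sum_congr rfl fun i _ => by ring
    _ = _ := by
      simp only [sum_sub_distrib, sum_add_distrib, ← mul_sum, hmass, mul_zero, sub_zero]

-- `c i` stands for `P_i''(ρ^i)` and `f i` for the friction `(θ/2) ρ^i v^i |v^i|`.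
theorem barycentric_velocity_identity {ι : Type*} [Fintype ι]
    {ρ q ρt ρx qt qx Fx Dux c f : ι → ℝ} {Ω R V Vt Vx : ℝ}
    (hρ : ∀ i, ρ i ≠ 0) (hR : ∑ i, ρ i = R) (hR0 : R ≠ 0) (hV : V = (∑ i, q i) / R)
    (hcont : ∀ i, ρt i + qx i = 0)
    (hF : ∀ i, Fx i = ρ i * c i * ρx i + (2 * (q i / ρ i) * qx i - (q i / ρ i) ^ 2 * ρx i))
    (hmom : ∀ i, qt i + Fx i = -f i - Ω * ρ i * (q i / ρ i - V))
    (hD : ∀ i, Dux i = 2 * (q i / ρ i - V) * (qx i - V * ρx i - ρ i * Vx)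
      - (q i / ρ i - V) ^ 2 * ρx i)
    (hVt : R * Vt = ∑ i, qt i - V * ∑ i, ρt i) (hVx : R * Vx = ∑ i, qx i - V * ∑ i, ρx i) :
    Vt + V * Vx + ∑ i, ρ i / R * c i * ρx i = 1 / R * (-∑ i, Dux i - ∑ i, f i) := by
  have hmass : ∑ i, ρ i * (q i / ρ i - V) = 0 := by
    rw [hV, ← hR]
    exact sum_mul_div_sub_sum_div_sum_eq_zero univ (fun i _ => hρ i) (hR ▸ hR0)
  have hρt : ∑ i, ρt i = -∑ i, qx i := by
    rw [← sum_neg_distrib]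
    exact sum_congr rfl fun i _ => eq_neg_of_add_eq_zero_left (hcont i)
  have hqt : ∑ i, qt i = -∑ i, Fx i - ∑ i, f i := by
    calc _ = ∑ i, (-Fx i - f i - Ω * (ρ i * (q i / ρ i - V))) :=
          sum_congr rfl fun i _ => by linear_combination hmom i
      _ = _ := by
        simp only [sum_sub_distrib, sum_neg_distrib, ← mul_sum, hmass, mul_zero, sub_zero]
  have hFsum : ∑ i, Fx i = ∑ i, ρ i * c i * ρx i
      + ∑ i, (2 * (q i / ρ i) * qx i - (q i / ρ i) ^ 2 * ρx i) := by
    rw [← sum_add_distrib]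
    exact sum_congr rfl fun i _ => hF i
  have hDsum : ∑ i, Dux i = ∑ i, (2 * (q i / ρ i) * qx i - (q i / ρ i) ^ 2 * ρx i)
      - 2 * V * ∑ i, qx i + V ^ 2 * ∑ i, ρx i := by
    rw [← sum_relative_flux_deriv_eq univ hmass]
    exact sum_congr rfl fun i _ => hD i
  have hP : ∑ i, ρ i / R * c i * ρx i = (∑ i, ρ i * c i * ρx i) / R := by
    rw [sum_div]
    exact sum_congr rfl fun i _ => by ring
  rw [hP]
  field_simp
  linear_combination hVt + V * hVx + hqt - V * hρt - hFsum + hDsum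

theorem barycentric_velocity_equation_general
    (n : ℕ) (T L θ Ω : ℝ)
    (ρ q ρt ρx qt qx Fx Dux : Fin n → ℝ → ℝ → ℝ)
    (p Ppp : Fin n → ℝ → ℝ) (Vt Vx : ℝ → ℝ → ℝ)
    (hρpos : ∀ i t x, 0 < ρ i t x)
    -- time and space derivatives of the densities and flow rates
    (hρt : ∀ i, ∀ t ∈ Set.Icc (0:ℝ) T, ∀ x ∈ Set.Icc (0:ℝ) L,
      HasDerivAt (fun s => ρ i s x) (ρt i t x) t)
    (hρx : ∀ i, ∀ t ∈ Set.Icc (0:ℝ) T, ∀ x ∈ Set.Icc (0:ℝ) L,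
      HasDerivAt (fun y => ρ i t y) (ρx i t x) x)
    (hqt : ∀ i, ∀ t ∈ Set.Icc (0:ℝ) T, ∀ x ∈ Set.Icc (0:ℝ) L,
      HasDerivAt (fun s => q i s x) (qt i t x) t)
    (hqx : ∀ i, ∀ t ∈ Set.Icc (0:ℝ) T, ∀ x ∈ Set.Icc (0:ℝ) L,
      HasDerivAt (fun y => q i t y) (qx i t x) x)
    -- continuity equations ρ^i_t + q^i_x = 0
    (hcont : ∀ i, ∀ t ∈ Set.Icc (0:ℝ) T, ∀ x ∈ Set.Icc (0:ℝ) L,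
      ρt i t x + qx i t x = 0)
    -- chain rule for the pressure with p_i'(r) = r P_i''(r)
    (hpx : ∀ i, ∀ t ∈ Set.Icc (0:ℝ) T, ∀ x ∈ Set.Icc (0:ℝ) L,
      HasDerivAt (fun y => p i (ρ i t y))
        (ρ i t x * Ppp i (ρ i t x) * ρx i t x) x)
    -- space derivative of the momentum flux p_i(ρ^i) + ρ^i (v^i)²
    (hFx : ∀ i, ∀ t ∈ Set.Icc (0:ℝ) T, ∀ x ∈ Set.Icc (0:ℝ) L,
      HasDerivAt (fun y => p i (ρ i t y) + ρ i t y * (q i t y / ρ i t y) ^ 2)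
        (Fx i t x) x)
    -- momentum equations q^i_t + (p_i(ρ^i) + ρ^i(v^i)²)_x = −(θ/2)ρ^i v^i|v^i| − Ω ρ^i u^i
    (hmom : ∀ i, ∀ t ∈ Set.Icc (0:ℝ) T, ∀ x ∈ Set.Icc (0:ℝ) L,
      qt i t x + Fx i t x
        = -(θ/2) * ρ i t x * (q i t x / ρ i t x) * |q i t x / ρ i t x|
          - Ω * ρ i t x * (q i t x / ρ i t x
              - (∑ j, q j t x) / (∑ j, ρ j t x)))
    -- derivatives of the barycentric velocity v = (Σ q^j)/(Σ ρ^j)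
    (hVt : ∀ t ∈ Set.Icc (0:ℝ) T, ∀ x ∈ Set.Icc (0:ℝ) L,
      HasDerivAt (fun s => (∑ j, q j s x) / (∑ j, ρ j s x)) (Vt t x) t)
    (hVx : ∀ t ∈ Set.Icc (0:ℝ) T, ∀ x ∈ Set.Icc (0:ℝ) L,
      HasDerivAt (fun y => (∑ j, q j t y) / (∑ j, ρ j t y)) (Vx t x) x)
    -- space derivatives of ρ^i (u^i)² with u^i = v^i − v
    (hDux : ∀ i, ∀ t ∈ Set.Icc (0:ℝ) T, ∀ x ∈ Set.Icc (0:ℝ) L,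
      HasDerivAt (fun y => ρ i t y
        * (q i t y / ρ i t y - (∑ j, q j t y) / (∑ j, ρ j t y)) ^ 2)
        (Dux i t x) x) :
    -- conclusion
    ∀ t ∈ Set.Icc (0:ℝ) T, ∀ x ∈ Set.Icc (0:ℝ) L,
      Vt t x + ((∑ j, q j t x) / (∑ j, ρ j t x)) * Vx t x
          + ∑ i, (ρ i t x / ∑ j, ρ j t x) * Ppp i (ρ i t x) * ρx i t x
        = (1 / ∑ j, ρ j t x)
            * (-(∑ i, Dux i t x)
              - ∑ i, (θ/2) * ρ i t x * (q i t x / ρ i t x)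
                  * |q i t x / ρ i t x|) := by
  intro t ht x hx
  rcases isEmpty_or_nonempty (Fin n) with hn | hn
  · -- with no species `v ≡ 0`, and the right-hand side is `1 / 0 * 0 = 0`
    have hV : Vt t x = 0 := (hVt t ht x hx).unique (by simpa using hasDerivAt_const t (0 : ℝ))
    simp [hV]
  have hρ : ∀ i, ρ i t x ≠ 0 := fun i => (hρpos i t x).ne'
  have hR : ∑ j, ρ j t x ≠ 0 := (sum_pos (fun i _ => hρpos i t x) univ_nonempty).ne'
  refine barycentric_velocity_identity (Ω := Ω) hρ rfl hR rfl (hcont · t ht x hx) ?flux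
    (fun i => (hmom i t ht x hx).trans (by ring)) ?relflux ?vt ?vx
  case flux =>
    exact fun i => (hFx i t ht x hx).unique
      ((hpx i t ht x hx).add ((hρx i t ht x hx).mul_div_sq (hqx i t ht x hx) (hρ i)))
  case relflux =>
    exact fun i => (hDux i t ht x hx).unique
      ((hρx i t ht x hx).mul_div_sub_sq (hqx i t ht x hx) (hVx t ht x hx) (hρ i))
  case vt =>
    exact (HasDerivAt.fun_sum fun i _ => hqt i t ht x hx).mul_deriv_div_eq
      (HasDerivAt.fun_sum fun i _ => hρt i t ht x hx) hR (hVt t ht x hx)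
  case vx =>
    exact (HasDerivAt.fun_sum fun i _ => hqx i t ht x hx).mul_deriv_div_eq
      (HasDerivAt.fun_sum fun i _ => hρx i t ht x hx) hR (hVx t ht x hx)

/-- equation for the barycentric velocity. For classical solutions
(ρ^i, q^i) of the mixture system ρ^i_t + q^i_x = 0,
q^i_t + (p_i(ρ^i) + ρ^i(v^i)²)_x = −(θ/2)ρ^i v^i|v^i| − Ω ρ^i u^i
with q^i = ρ^i v^i and p_i'(r) = r P_i''(r), the barycentric velocity
v = (Σ ρ^j v^j)/ρ satisfies
v_t + v v_x + Σ (ρ^i/ρ) P_i''(ρ^i) ρ^i_x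
  = (1/ρ)(−Σ (ρ^i (u^i)²)_x − Σ (θ/2) ρ^i v^i |v^i|),
where u^i = v^i − v and ρ = Σ ρ^i. -/
theorem barycentric_velocity_equation
    (n : ℕ) (T L θ Ω : ℝ) (hT : 0 < T) (hL : 0 < L) (hθ : 0 < θ)
    (ρ q ρt ρx qt qx Fx Dux : Fin n → ℝ → ℝ → ℝ)
    (p Ppp : Fin n → ℝ → ℝ) (Vt Vx : ℝ → ℝ → ℝ)
    (hρpos : ∀ i t x, 0 < ρ i t x)
    -- time and space derivatives of the densities and flow rates
    (hρt : ∀ i, ∀ t ∈ Set.Icc (0:ℝ) T, ∀ x ∈ Set.Icc (0:ℝ) L,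
      HasDerivAt (fun s => ρ i s x) (ρt i t x) t)
    (hρx : ∀ i, ∀ t ∈ Set.Icc (0:ℝ) T, ∀ x ∈ Set.Icc (0:ℝ) L,
      HasDerivAt (fun y => ρ i t y) (ρx i t x) x)
    (hqt : ∀ i, ∀ t ∈ Set.Icc (0:ℝ) T, ∀ x ∈ Set.Icc (0:ℝ) L,
      HasDerivAt (fun s => q i s x) (qt i t x) t)
    (hqx : ∀ i, ∀ t ∈ Set.Icc (0:ℝ) T, ∀ x ∈ Set.Icc (0:ℝ) L,
      HasDerivAt (fun y => q i t y) (qx i t x) x)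
    -- continuity equations ρ^i_t + q^i_x = 0
    (hcont : ∀ i, ∀ t ∈ Set.Icc (0:ℝ) T, ∀ x ∈ Set.Icc (0:ℝ) L,
      ρt i t x + qx i t x = 0)
    -- chain rule for the pressure with p_i'(r) = r P_i''(r)
    (hpx : ∀ i, ∀ t ∈ Set.Icc (0:ℝ) T, ∀ x ∈ Set.Icc (0:ℝ) L,
      HasDerivAt (fun y => p i (ρ i t y))
        (ρ i t x * Ppp i (ρ i t x) * ρx i t x) x)
    -- space derivative of the momentum flux p_i(ρ^i) + ρ^i (v^i)²
    (hFx : ∀ i, ∀ t ∈ Set.Icc (0:ℝ) T, ∀ x ∈ Set.Icc (0:ℝ) L,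
      HasDerivAt (fun y => p i (ρ i t y) + ρ i t y * (q i t y / ρ i t y) ^ 2)
        (Fx i t x) x)
    -- momentum equations q^i_t + (p_i(ρ^i) + ρ^i(v^i)²)_x = −(θ/2)ρ^i v^i|v^i| − Ω ρ^i u^i
    (hmom : ∀ i, ∀ t ∈ Set.Icc (0:ℝ) T, ∀ x ∈ Set.Icc (0:ℝ) L,
      qt i t x + Fx i t x
        = -(θ/2) * ρ i t x * (q i t x / ρ i t x) * |q i t x / ρ i t x|
          - Ω * ρ i t x * (q i t x / ρ i t x
              - (∑ j, q j t x) / (∑ j, ρ j t x)))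
    -- derivatives of the barycentric velocity v = (Σ q^j)/(Σ ρ^j)
    (hVt : ∀ t ∈ Set.Icc (0:ℝ) T, ∀ x ∈ Set.Icc (0:ℝ) L,
      HasDerivAt (fun s => (∑ j, q j s x) / (∑ j, ρ j s x)) (Vt t x) t)
    (hVx : ∀ t ∈ Set.Icc (0:ℝ) T, ∀ x ∈ Set.Icc (0:ℝ) L,
      HasDerivAt (fun y => (∑ j, q j t y) / (∑ j, ρ j t y)) (Vx t x) x)
    -- space derivatives of ρ^i (u^i)² with u^i = v^i − v
    (hDux : ∀ i, ∀ t ∈ Set.Icc (0:ℝ) T, ∀ x ∈ Set.Icc (0:ℝ) L,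
      HasDerivAt (fun y => ρ i t y
        * (q i t y / ρ i t y - (∑ j, q j t y) / (∑ j, ρ j t y)) ^ 2)
        (Dux i t x) x) :
    -- conclusion
    ∀ t ∈ Set.Icc (0:ℝ) T, ∀ x ∈ Set.Icc (0:ℝ) L,
      Vt t x + ((∑ j, q j t x) / (∑ j, ρ j t x)) * Vx t x
          + ∑ i, (ρ i t x / ∑ j, ρ j t x) * Ppp i (ρ i t x) * ρx i t x
        = (1 / ∑ j, ρ j t x)
            * (-(∑ i, Dux i t x)
              - ∑ i, (θ/2) * ρ i t x * (q i t x / ρ i t x)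
                  * |q i t x / ρ i t x|) :=
  barycentric_velocity_equation_general n T L θ Ω ρ q ρt ρx qt qx Fx Dux p Ppp Vt Vx hρpos hρt hρx
    hqt hqx hcont hpx hFx hmom hVt hVx hDux
end
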